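/- arXiv:2207.12985 — 3 statements merged into one kernel-verified Lean document; each statement's English description precedes it below -/
import Mathlib

section
/- Let F be a field of characteristic 0 with a discrete valuation, ring of integers 𝒪, maximal ideal 𝔭, uniformizer ϖ, and residue field of characteristic 2. Define n×n matrices over F: P with P_{i,i} = 1, P_{i,i+1} = 1, P_{n,1} = −ϖu and 0 elsewhere; X with last row all 1's and 0 elsewhere; Y with first column all −ϖu and 0 elsewhere; Q upper triangular with all entries on and above the diagonal equal to 1. Let h_u be the 2n×2n block matrix [[P, X],[Y, Q]], and let J_{2n} be the anti-diagonal sign matrix with (i, 2n+1−i) entry (−1)^{i−1}. Then ᵗh_u · J_{2n} · h_u = J_{2n}; i.e., h_u belongs to the symplectic group Sp_{2n}(F) defined by the form J_{2n}. -/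
open Finset

private def Hmat {F : Type*} [Field F] (n : ℕ) (c : F) (a b : ℕ) : F :=
  if a < n ∧ b < n then
    (if a = b then 1 else 0) + (if b = a + 1 then 1 else 0)
      + (if a = n - 1 ∧ b = 0 then c else 0)
  else if a < n then (if a = n - 1 then 1 else 0)
  else if b < n then (if b = 0 then c else 0)
  else (if a ≤ b then 1 else 0)

private lemma HmatPP {F : Type*} [Field F] {n a b : ℕ} (ha : a < n) (hb : b < n) (c : F) :
    Hmat n c a b = (if a = b then 1 else 0) + (if b = a + 1 then 1 else 0)
      + (if a = n - 1 ∧ b = 0 then c else 0) := by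
  unfold Hmat; rw [if_pos ⟨ha, hb⟩]

private lemma HmatX {F : Type*} [Field F] {n a b : ℕ} (ha : a < n) (hb : ¬ b < n) (c : F) :
    Hmat n c a b = (if a = n - 1 then 1 else 0) := by
  unfold Hmat; rw [if_neg (by tauto), if_pos ha]

private lemma HmatY {F : Type*} [Field F] {n a b : ℕ} (ha : ¬ a < n) (hb : b < n) (c : F) :
    Hmat n c a b = (if b = 0 then c else 0) := by
  unfold Hmat; rw [if_neg (by tauto), if_neg ha, if_pos hb]

private lemma HmatQ {F : Type*} [Field F] {n a b : ℕ} (ha : ¬ a < n) (hb : ¬ b < n) (c : F) :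
    Hmat n c a b = (if a ≤ b then 1 else 0) := by
  unfold Hmat; rw [if_neg (by tauto), if_neg ha, if_neg hb]

private lemma pow_succ_neg_one {F : Type*} [Field F] {a b : ℕ} (h : a + 1 = b) :
    ((-1 : F)) ^ b = -(-1 : F) ^ a := by subst h; rw [pow_succ]; ring

private lemma pow_compl_neg_one {F : Type*} [Field F] {a b n : ℕ} (hn : 0 < n)
    (h : a + b = 2 * n - 1) : ((-1 : F)) ^ a = -(-1 : F) ^ b := by
  have h2 : a + b = 2 * (n - 1) + 1 := by omega
  have hab : ((-1 : F)) ^ (a + b) = -1 := by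
    rw [h2, pow_succ, pow_mul, neg_one_sq, one_pow, one_mul]
  have hb2 : ((-1 : F)) ^ b * (-1 : F) ^ b = 1 := by
    rw [← pow_add, ← two_mul, pow_mul, neg_one_sq, one_pow]
  calc ((-1 : F)) ^ a = (-1 : F) ^ a * ((-1 : F) ^ b * (-1 : F) ^ b) := by rw [hb2, mul_one]
    _ = ((-1 : F)) ^ (a + b) * (-1 : F) ^ b := by rw [pow_add]; ring
    _ = -(-1 : F) ^ b := by rw [hab]; ring

private lemma sum_delta {F : Type*} [Field F] {n K : ℕ} (hK : K < n) (v : F) (f : ℕ → F)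
    (hf : ∀ k, k < n → f k = if k = K then v else 0) :
    ∑ k ∈ range n, f k = v := by
  rw [Finset.sum_congr rfl fun k hk => hf k (Finset.mem_range.mp hk),
    Finset.sum_ite_eq' (range n) K fun _ => v, if_pos (Finset.mem_range.mpr hK)]

/-- Sum against a column of the `P` block. -/
private lemma sumP_left {F : Type*} [Field F] {n x : ℕ} (hn : 0 < n) (hx : x < n) (c : F)
    (W : ℕ → F) :
    ∑ k ∈ range n, (-1 : F) ^ k *
      ((if k = x then 1 else 0) + (if x = k + 1 then 1 else 0)
        + (if k = n - 1 ∧ x = 0 then c else 0)) * W k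
    = (-1 : F) ^ x * W x +
        (if x = 0 then (-1 : F) ^ (n - 1) * c * W (n - 1) else (-1 : F) ^ (x - 1) * W (x - 1)) := by
  have split : ∀ k ∈ range n, (-1 : F) ^ k *
      ((if k = x then 1 else 0) + (if x = k + 1 then 1 else 0)
        + (if k = n - 1 ∧ x = 0 then c else 0)) * W k =
      (if k = x then (-1 : F) ^ k * W k else 0) + ((if x = k + 1 then (-1 : F) ^ k * W k else 0)
        + (if k = n - 1 ∧ x = 0 then (-1 : F) ^ k * c * W k else 0)) := by
    intro k _; split_ifs <;> ring
  rw [Finset.sum_congr rfl split, Finset.sum_add_distrib, Finset.sum_add_distrib]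
  have hSa : ∑ k ∈ range n, (if k = x then (-1 : F) ^ k * W k else 0) = (-1 : F) ^ x * W x := by
    rw [Finset.sum_ite_eq' (range n) x fun k => (-1 : F) ^ k * W k,
      if_pos (Finset.mem_range.mpr hx)]
  rw [hSa]
  rcases Nat.eq_zero_or_pos x with rfl | hx1
  · have hSb : ∑ k ∈ range n, (if 0 = k + 1 then (-1 : F) ^ k * W k else 0) = 0 := by
      apply Finset.sum_eq_zero; intro k _; rw [if_neg (show ¬ (0 = k + 1) by omega)]
    have hSc : ∑ k ∈ range n, (if k = n - 1 ∧ 0 = 0 then (-1 : F) ^ k * c * W k else 0)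
        = (-1 : F) ^ (n - 1) * c * W (n - 1) := by
      apply sum_delta (K := n - 1) (by omega) _ _ (fun k hk => ?_)
      rcases eq_or_ne k (n - 1) with rfl | hne
      · simp only [eq_self_iff_true, and_true, true_and, if_true, if_pos (show n - 1 = n - 1 ∧ 0 = 0 from ⟨rfl, rfl⟩),
          if_pos (rfl : n - 1 = n - 1)]
      · simp only [eq_self_iff_true, and_true, true_and, if_true, if_neg (show ¬ (k = n - 1 ∧ 0 = 0) from fun hc => hne hc.1), if_neg hne]
    rw [hSb, hSc, if_pos rfl, zero_add]
  · have hSb : ∑ k ∈ range n, (if x = k + 1 then (-1 : F) ^ k * W k else 0)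
        = (-1 : F) ^ (x - 1) * W (x - 1) := by
      apply sum_delta (K := x - 1) (by omega) _ _ (fun k hk => ?_)
      rcases eq_or_ne k (x - 1) with rfl | hne
      · simp only [eq_self_iff_true, and_true, true_and, if_true, if_pos (show x = (x - 1) + 1 by omega), if_pos (rfl : x - 1 = x - 1)]
      · simp only [eq_self_iff_true, and_true, true_and, if_true, if_neg (show ¬ x = k + 1 by omega), if_neg hne]
    have hSc : ∑ k ∈ range n, (if k = n - 1 ∧ x = 0 then (-1 : F) ^ k * c * W k else 0) = 0 := by
      apply Finset.sum_eq_zero; intro k _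
      rw [if_neg (show ¬ (k = n - 1 ∧ x = 0) from fun hc => by omega)]
    rw [hSb, hSc, if_neg (show ¬ x = 0 by omega), add_zero]

/-- Sum against a reflected column of the `P` block. -/
private lemma sumP_right {F : Type*} [Field F] {n x : ℕ} (hn : 0 < n) (hx : x < n) (c : F)
    (V : ℕ → F) :
    ∑ k ∈ range n, V k *
      ((if n - 1 - k = x then 1 else 0) + (if x = (n - 1 - k) + 1 then 1 else 0)
        + (if n - 1 - k = n - 1 ∧ x = 0 then c else 0))
    = V (n - 1 - x) + (if x = 0 then c * V 0 else V (n - x)) := by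
  have split : ∀ k ∈ range n, V k *
      ((if n - 1 - k = x then 1 else 0) + (if x = (n - 1 - k) + 1 then 1 else 0)
        + (if n - 1 - k = n - 1 ∧ x = 0 then c else 0)) =
      (if n - 1 - k = x then V k else 0) + ((if x = (n - 1 - k) + 1 then V k else 0)
        + (if n - 1 - k = n - 1 ∧ x = 0 then c * V k else 0)) := by
    intro k _; split_ifs <;> ring
  rw [Finset.sum_congr rfl split, Finset.sum_add_distrib, Finset.sum_add_distrib]
  have hSa : ∑ k ∈ range n, (if n - 1 - k = x then V k else 0) = V (n - 1 - x) := by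
    apply sum_delta (K := n - 1 - x) (by omega) _ _ (fun k hk => ?_)
    rcases eq_or_ne k (n - 1 - x) with rfl | hne
    · simp only [eq_self_iff_true, and_true, true_and, if_true, if_pos (show n - 1 - (n - 1 - x) = x by omega),
        if_pos (rfl : n - 1 - x = n - 1 - x)]
    · simp only [eq_self_iff_true, and_true, true_and, if_true, if_neg (show ¬ n - 1 - k = x by omega), if_neg hne]
  rw [hSa]
  rcases Nat.eq_zero_or_pos x with rfl | hx1
  · have hSb : ∑ k ∈ range n, (if 0 = (n - 1 - k) + 1 then V k else 0) = 0 := by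
      apply Finset.sum_eq_zero; intro k _; rw [if_neg (show ¬ (0 = (n - 1 - k) + 1) by omega)]
    have hSc : ∑ k ∈ range n, (if n - 1 - k = n - 1 ∧ 0 = 0 then c * V k else 0) = c * V 0 := by
      apply sum_delta (K := 0) (by omega) _ _ (fun k hk => ?_)
      rcases eq_or_ne k 0 with rfl | hne
      · simp only [eq_self_iff_true, and_true, true_and, if_true, Nat.sub_zero]
      · simp only [eq_self_iff_true, and_true, true_and, if_true,
          if_neg (show ¬ n - 1 - k = n - 1 by omega), if_neg hne]
    rw [hSb, hSc, if_pos rfl, zero_add]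
  · have hSb : ∑ k ∈ range n, (if x = (n - 1 - k) + 1 then V k else 0) = V (n - x) := by
      apply sum_delta (K := n - x) (by omega) _ _ (fun k hk => ?_)
      rcases eq_or_ne k (n - x) with rfl | hne
      · simp only [eq_self_iff_true, and_true, true_and, if_true, if_pos (show x = (n - 1 - (n - x)) + 1 by omega),
          if_pos (rfl : n - x = n - x)]
      · simp only [eq_self_iff_true, and_true, true_and, if_true, if_neg (show ¬ x = (n - 1 - k) + 1 by omega), if_neg hne]
    have hSc : ∑ k ∈ range n, (if n - 1 - k = n - 1 ∧ x = 0 then c * V k else 0) = 0 := by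
      apply Finset.sum_eq_zero; intro k _
      rw [if_neg (show ¬ (n - 1 - k = n - 1 ∧ x = 0) by omega)]
    rw [hSb, hSc, if_neg (show ¬ x = 0 by omega), add_zero]

private lemma key {F : Type*} [Field F] {n : ℕ} (hn : 0 < n) (c : F) (i j : ℕ)
    (hi : i < 2 * n) (hj : j < 2 * n) :
    ∑ k ∈ range (2 * n), (-1 : F) ^ k * Hmat n c k i * Hmat n c (2 * n - 1 - k) j
      = if i + j = 2 * n - 1 then (-1 : F) ^ i else 0 := by
  rw [two_mul, Finset.sum_range_add]
  rcases lt_or_ge i n with hi1 | hi1 <;> rcases lt_or_ge j n with hj1 | hj1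
  · -- Case A : i < n, j < n
    have e1 : ∀ k ∈ range n, (-1 : F) ^ k * Hmat n c k i * Hmat n c (n + n - 1 - k) j =
        (-1 : F) ^ k *
          ((if k = i then 1 else 0) + (if i = k + 1 then 1 else 0)
            + (if k = n - 1 ∧ i = 0 then c else 0)) * (if j = 0 then c else 0) := by
      intro k hk; rw [mem_range] at hk
      rw [HmatPP hk hi1, HmatY (show ¬ n + n - 1 - k < n by omega) hj1]
    have e2 : ∀ k ∈ range n, (-1 : F) ^ (n + k) * Hmat n c (n + k) i
          * Hmat n c (n + n - 1 - (n + k)) j =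
        ((-1 : F) ^ (n + k) * (if i = 0 then c else 0)) *
          ((if n - 1 - k = j then 1 else 0) + (if j = (n - 1 - k) + 1 then 1 else 0)
            + (if n - 1 - k = n - 1 ∧ j = 0 then c else 0)) := by
      intro k hk; rw [mem_range] at hk
      have hidx : n + n - 1 - (n + k) = n - 1 - k := by omega
      rw [hidx, HmatY (show ¬ n + k < n by omega) hi1, HmatPP (show n - 1 - k < n by omega) hj1]
    rw [Finset.sum_congr rfl e1, Finset.sum_congr rfl e2,
      sumP_left hn hi1 c (fun _ => if j = 0 then c else 0),
      sumP_right hn hj1 c (fun k => (-1 : F) ^ (n + k) * (if i = 0 then c else 0)),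
      if_neg (show ¬ i + j = n + n - 1 by omega)]
    rcases Nat.eq_zero_or_pos i with rfl | hi0 <;> rcases Nat.eq_zero_or_pos j with rfl | hj0
    · simp only [eq_self_iff_true, and_true, true_and, if_true, if_pos (rfl : (0:ℕ) = 0), pow_zero, Nat.add_zero, Nat.sub_zero]
      have p1 : ((-1 : F)) ^ (n + (n - 1)) = -1 := by
        have := pow_compl_neg_one (F := F) hn (show (n + (n - 1)) + 0 = 2 * n - 1 by omega)
        simpa using this
      have p2 : ((-1 : F)) ^ n = -(-1 : F) ^ (n - 1) := pow_succ_neg_one (by omega)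
      rw [p1, p2]; ring
    · simp only [eq_self_iff_true, and_true, true_and, if_true, if_pos (rfl : (0:ℕ) = 0), if_neg (show ¬ j = 0 by omega), pow_zero,
        Nat.add_zero]
      have p1 : ((-1 : F)) ^ (n + (n - j)) = -(-1 : F) ^ (n + (n - 1 - j)) :=
        pow_succ_neg_one (by omega)
      rw [p1]; ring
    · simp only [eq_self_iff_true, and_true, true_and, if_true, if_neg (show ¬ i = 0 by omega), if_pos (rfl : (0:ℕ) = 0)]
      have p1 : ((-1 : F)) ^ i = -(-1 : F) ^ (i - 1) := pow_succ_neg_one (by omega)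
      rw [p1]; ring
    · simp only [eq_self_iff_true, and_true, true_and, if_true, if_neg (show ¬ i = 0 by omega), if_neg (show ¬ j = 0 by omega)]
      ring
  · -- Case B : i < n, j ≥ n
    have e1 : ∀ k ∈ range n, (-1 : F) ^ k * Hmat n c k i * Hmat n c (n + n - 1 - k) j =
        (-1 : F) ^ k *
          ((if k = i then 1 else 0) + (if i = k + 1 then 1 else 0)
            + (if k = n - 1 ∧ i = 0 then c else 0)) *
          (if n + n - 1 - k ≤ j then 1 else 0) := by
      intro k hk; rw [mem_range] at hk
      rw [HmatPP hk hi1, HmatQ (show ¬ n + n - 1 - k < n by omega) (by omega)]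
    have e2 : ∑ k ∈ range n, (-1 : F) ^ (n + k) * Hmat n c (n + k) i
          * Hmat n c (n + n - 1 - (n + k)) j
        = (-1 : F) ^ n * (if i = 0 then c else 0) := by
      apply sum_delta (K := 0) hn _ _ (fun k hk => ?_)
      have hidx : n + n - 1 - (n + k) = n - 1 - k := by omega
      rw [hidx, HmatY (show ¬ n + k < n by omega) hi1,
        HmatX (show n - 1 - k < n by omega) (by omega)]
      rcases eq_or_ne k 0 with rfl | hne
      · simp only [eq_self_iff_true, and_true, true_and, if_true, Nat.add_zero, Nat.sub_zero, if_pos (rfl : n - 1 = n - 1),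
          if_pos (rfl : (0:ℕ) = 0)]
        ring
      · simp only [eq_self_iff_true, and_true, true_and, if_true, if_neg (show ¬ n - 1 - k = n - 1 by omega), if_neg hne, mul_zero]
    rw [Finset.sum_congr rfl e1, e2,
      sumP_left hn hi1 c (fun k => if n + n - 1 - k ≤ j then 1 else 0)]
    rcases Nat.eq_zero_or_pos i with rfl | hi0
    · simp only [eq_self_iff_true, and_true, true_and, if_true, if_pos (rfl : (0:ℕ) = 0), pow_zero, Nat.sub_zero, zero_add]
      have p2 : ((-1 : F)) ^ n = -(-1 : F) ^ (n - 1) := pow_succ_neg_one (by omega)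
      rw [if_pos (show n + n - 1 - (n - 1) ≤ j by omega), p2]
      rcases eq_or_ne j (n + n - 1) with rfl | hne
      · rw [if_pos (show n + n - 1 ≤ n + n - 1 from le_refl _),
          if_pos (rfl : n + n - 1 = n + n - 1)]
        ring
      · rw [if_neg (show ¬ n + n - 1 ≤ j by omega), if_neg (show ¬ j = n + n - 1 by omega)]
        ring
    · simp only [eq_self_iff_true, and_true, true_and, if_true, if_neg (show ¬ i = 0 by omega), mul_zero, add_zero]
      rcases lt_trichotomy (i + j) (n + n - 1) with hc1 | hc1 | hc1
      · rw [if_neg (show ¬ n + n - 1 - i ≤ j by omega),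
          if_neg (show ¬ n + n - 1 - (i - 1) ≤ j by omega),
          if_neg (show ¬ i + j = n + n - 1 by omega)]
        ring
      · rw [if_pos (show n + n - 1 - i ≤ j by omega),
          if_neg (show ¬ n + n - 1 - (i - 1) ≤ j by omega),
          if_pos (show i + j = n + n - 1 by omega)]
        ring
      · rw [if_pos (show n + n - 1 - i ≤ j by omega),
          if_pos (show n + n - 1 - (i - 1) ≤ j by omega),
          if_neg (show ¬ i + j = n + n - 1 by omega),
          pow_succ_neg_one (F := F) (show (i - 1) + 1 = i by omega)]
        ring
  · -- Case C : i ≥ n, j < n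
    have e1 : ∑ k ∈ range n, (-1 : F) ^ k * Hmat n c k i * Hmat n c (n + n - 1 - k) j =
        (-1 : F) ^ (n - 1) * (if j = 0 then c else 0) := by
      apply sum_delta (K := n - 1) (by omega) _ _ (fun k hk => ?_)
      rw [HmatX hk (by omega), HmatY (show ¬ n + n - 1 - k < n by omega) hj1]
      rcases eq_or_ne k (n - 1) with rfl | hne
      · simp only [eq_self_iff_true, and_true, true_and, if_true, if_pos (rfl : n - 1 = n - 1)]; ring
      · simp only [eq_self_iff_true, and_true, true_and, if_true, if_neg hne]; ring
    have e2 : ∀ k ∈ range n, (-1 : F) ^ (n + k) * Hmat n c (n + k) i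
          * Hmat n c (n + n - 1 - (n + k)) j =
        ((-1 : F) ^ (n + k) * (if n + k ≤ i then 1 else 0)) *
          ((if n - 1 - k = j then 1 else 0) + (if j = (n - 1 - k) + 1 then 1 else 0)
            + (if n - 1 - k = n - 1 ∧ j = 0 then c else 0)) := by
      intro k hk; rw [mem_range] at hk
      have hidx : n + n - 1 - (n + k) = n - 1 - k := by omega
      rw [hidx, HmatQ (show ¬ n + k < n by omega) (by omega),
        HmatPP (show n - 1 - k < n by omega) hj1]
    rw [e1, Finset.sum_congr rfl e2,
      sumP_right hn hj1 c (fun k => (-1 : F) ^ (n + k) * (if n + k ≤ i then 1 else 0))]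
    rcases Nat.eq_zero_or_pos j with rfl | hj0
    · simp only [eq_self_iff_true, and_true, true_and, if_true, if_pos (rfl : (0:ℕ) = 0), Nat.add_zero, Nat.sub_zero, add_zero]
      rw [if_pos (show n ≤ i by omega)]
      have p2 : ((-1 : F)) ^ n = -(-1 : F) ^ (n - 1) := pow_succ_neg_one (by omega)
      rcases eq_or_ne i (n + n - 1) with rfl | hne
      · rw [if_pos (show n + (n - 1) ≤ n + n - 1 by omega),
          if_pos (rfl : n + n - 1 = n + n - 1)]
        have p1 : ((-1 : F)) ^ (n + (n - 1)) = -1 := by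
          have := pow_compl_neg_one (F := F) hn (show (n + (n - 1)) + 0 = 2 * n - 1 by omega)
          simpa using this
        have p3 : ((-1 : F)) ^ (n + n - 1) = -1 := by
          have := pow_compl_neg_one (F := F) hn (show (n + n - 1) + 0 = 2 * n - 1 by omega)
          simpa using this
        rw [p1, p2, p3]; ring
      · rw [if_neg (show ¬ n + (n - 1) ≤ i by omega), if_neg (show ¬ i = n + n - 1 by omega),
          p2]
        ring
    · simp only [eq_self_iff_true, and_true, true_and, if_true, if_neg (show ¬ j = 0 by omega)]
      rcases lt_trichotomy (i + j) (n + n - 1) with hc1 | hc1 | hc1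
      · rw [if_neg (show ¬ n + (n - 1 - j) ≤ i by omega),
          if_neg (show ¬ n + (n - j) ≤ i by omega),
          if_neg (show ¬ i + j = n + n - 1 by omega)]
        ring
      · rw [if_pos (show n + (n - 1 - j) ≤ i by omega),
          if_neg (show ¬ n + (n - j) ≤ i by omega),
          if_pos (show i + j = n + n - 1 by omega),
          show n + (n - 1 - j) = i by omega]
        ring
      · rw [if_pos (show n + (n - 1 - j) ≤ i by omega),
          if_pos (show n + (n - j) ≤ i by omega),
          if_neg (show ¬ i + j = n + n - 1 by omega),
          pow_succ_neg_one (F := F) (show (n + (n - 1 - j)) + 1 = n + (n - j) by omega)]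
        ring
  · -- Case D : i ≥ n, j ≥ n
    have e1 : ∑ k ∈ range n, (-1 : F) ^ k * Hmat n c k i * Hmat n c (n + n - 1 - k) j =
        (-1 : F) ^ (n - 1) := by
      apply sum_delta (K := n - 1) (by omega) _ _ (fun k hk => ?_)
      rw [HmatX hk (by omega), HmatQ (show ¬ n + n - 1 - k < n by omega) (by omega)]
      rcases eq_or_ne k (n - 1) with rfl | hne
      · simp only [eq_self_iff_true, and_true, true_and, if_true, if_pos (rfl : n - 1 = n - 1),
          if_pos (show n + n - 1 - (n - 1) ≤ j by omega)]
        ring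
      · simp only [eq_self_iff_true, and_true, true_and, if_true, if_neg hne]; ring
    have e2 : ∑ k ∈ range n, (-1 : F) ^ (n + k) * Hmat n c (n + k) i
          * Hmat n c (n + n - 1 - (n + k)) j = (-1 : F) ^ n := by
      apply sum_delta (K := 0) hn _ _ (fun k hk => ?_)
      have hidx : n + n - 1 - (n + k) = n - 1 - k := by omega
      rw [hidx, HmatQ (show ¬ n + k < n by omega) (by omega),
        HmatX (show n - 1 - k < n by omega) (by omega)]
      rcases eq_or_ne k 0 with rfl | hne
      · simp only [eq_self_iff_true, and_true, true_and, if_true, Nat.add_zero, Nat.sub_zero, if_pos (show n ≤ i by omega),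
          if_pos (rfl : n - 1 = n - 1), if_pos (rfl : (0:ℕ) = 0)]
        ring
      · simp only [eq_self_iff_true, and_true, true_and, if_true, if_neg (show ¬ n - 1 - k = n - 1 by omega), if_neg hne, mul_zero]
    rw [e1, e2, if_neg (show ¬ i + j = n + n - 1 by omega),
      pow_succ_neg_one (F := F) (show (n - 1) + 1 = n by omega)]
    ring

open Matrix in
theorem stmt_10 (F : Type*) [Field F] (n : ℕ) (hn : 0 < n) (ϖ u : F)
    (J : Matrix (Fin (2 * n)) (Fin (2 * n)) F)
    (hJ : ∀ i j, J i j = if (i : ℕ) + (j : ℕ) = 2 * n - 1 then (-1 : F) ^ (i : ℕ) else 0)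
    (h : Matrix (Fin (2 * n)) (Fin (2 * n)) F)
    (hh : ∀ i j : Fin (2 * n), h i j =
      if (i : ℕ) < n ∧ (j : ℕ) < n then
        -- block P: 1's on the diagonal and superdiagonal, -ϖu in the bottom-left corner
        (if i = j then 1 else 0) + (if (j : ℕ) = (i : ℕ) + 1 then 1 else 0)
          + (if (i : ℕ) = n - 1 ∧ (j : ℕ) = 0 then -(ϖ * u) else 0)
      else if (i : ℕ) < n then
        -- block X: last row all 1's
        (if (i : ℕ) = n - 1 then 1 else 0)
      else if (j : ℕ) < n then
        -- block Y: first column all -ϖu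
        (if (j : ℕ) = 0 then -(ϖ * u) else 0)
      else
        -- block Q: upper triangular with 1's on and above the diagonal
        (if (i : ℕ) ≤ (j : ℕ) then 1 else 0)) :
    hᵀ * J * h = J := by
  have hH : ∀ a b : Fin (2 * n), h a b = Hmat n (-(ϖ * u)) (a : ℕ) (b : ℕ) := by
    intro a b
    rw [hh]
    unfold Hmat
    simp only [eq_self_iff_true, and_true, true_and, if_true, Fin.ext_iff]
  ext i j
  have hinner : ∀ l : Fin (2 * n), (hᵀ * J) i l =
      (-1 : F) ^ (2 * n - 1 - (l : ℕ)) * Hmat n (-(ϖ * u)) (2 * n - 1 - (l : ℕ)) (i : ℕ) := by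
    intro l
    rw [Matrix.mul_apply]
    rw [Finset.sum_eq_single (⟨2 * n - 1 - (l : ℕ), by omega⟩ : Fin (2 * n))]
    · rw [Matrix.transpose_apply, hJ, hH]
      have hval : ((⟨2 * n - 1 - (l : ℕ), by omega⟩ : Fin (2 * n)) : ℕ)
          = 2 * n - 1 - (l : ℕ) := rfl
      rw [hval, if_pos (show 2 * n - 1 - (l : ℕ) + (l : ℕ) = 2 * n - 1 by omega)]
      ring
    · intro k _ hk
      rw [hJ, if_neg, mul_zero]
      intro hkl
      apply hk
      apply Fin.ext
      show (k : ℕ) = 2 * n - 1 - (l : ℕ)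
      omega
    · intro habs; exact absurd (Finset.mem_univ _) habs
  rw [Matrix.mul_apply, Finset.sum_congr rfl (fun l _ => by rw [hinner l, hH])]
  have hfin : ∑ l : Fin (2 * n),
      (-1 : F) ^ (2 * n - 1 - (l : ℕ)) * Hmat n (-(ϖ * u)) (2 * n - 1 - (l : ℕ)) (i : ℕ) *
        Hmat n (-(ϖ * u)) (l : ℕ) (j : ℕ) =
      ∑ l ∈ range (2 * n),
        (-1 : F) ^ (2 * n - 1 - l) * Hmat n (-(ϖ * u)) (2 * n - 1 - l) (i : ℕ) *
          Hmat n (-(ϖ * u)) l (j : ℕ) :=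
    Fin.sum_univ_eq_sum_range
      (fun l => (-1 : F) ^ (2 * n - 1 - l) * Hmat n (-(ϖ * u)) (2 * n - 1 - l) (i : ℕ) *
        Hmat n (-(ϖ * u)) l (j : ℕ)) (2 * n)
  rw [hfin, ← Finset.sum_range_reflect]
  have hrefl : ∀ k ∈ range (2 * n),
      (-1 : F) ^ (2 * n - 1 - (2 * n - 1 - k)) *
          Hmat n (-(ϖ * u)) (2 * n - 1 - (2 * n - 1 - k)) (i : ℕ) *
        Hmat n (-(ϖ * u)) (2 * n - 1 - k) (j : ℕ) =
      (-1 : F) ^ k * Hmat n (-(ϖ * u)) k (i : ℕ) * Hmat n (-(ϖ * u)) (2 * n - 1 - k) (j : ℕ) := by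
    intro k hk; rw [mem_range] at hk
    have : 2 * n - 1 - (2 * n - 1 - k) = k := by omega
    rw [this]
  rw [Finset.sum_congr rfl hrefl, key hn (-(ϖ * u)) (i : ℕ) (j : ℕ) i.isLt j.isLt, hJ]
end

section
/- Let G be a finite group, N a normal subgroup with G/N cyclic, and σ an irreducible complex representation of N whose G-conjugacy stabilizer is all of G (i.e., σ^g ≅ σ for all g ∈ G). Then σ extends to a representation of G, i.e., there exists a representation σ̃ of G with σ̃|_N ≅ σ. -/
/-!
Pick `g ∈ G` whose image generates `G ⧸ N`, and let `m` be the order of that image. Invariance of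
`σ` under `g` gives an invertible `T` with `σ (g n g⁻¹) = T σ(n) T⁻¹`. Then `σ(g ^ m)⁻¹ T ^ m`
commutes with `σ(N)`, so by Schur's lemma it is a nonzero scalar `μ`; replacing `T` by `T / ζ`
with `ζ ^ m = μ` gives `T ^ m = σ(g ^ m)`. Now `g ^ k n ↦ T ^ k σ(n)` is a well-defined
representation of `G` extending `σ`.
-/

section Extension

variable {G M : Type*} [Group G] [Group M] {N : Subgroup G} [N.Normal] {ρ : N →* M} {g : G}
  {T : M}

theorem map_conjNormal_zpow (hT : ∀ n : N, ρ (MulAut.conjNormal g n) = T * ρ n * T⁻¹)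
    (k : ℤ) (n : N) : ρ (MulAut.conjNormal (g ^ k) n) = T ^ k * ρ n * (T ^ k)⁻¹ := by
  induction k using Int.induction_on generalizing n with
  | zero => simp
  | succ k ih =>
    rw [zpow_add_one, map_mul, MulAut.mul_apply, ih, hT, zpow_add_one]
    group
  | pred k ih =>
    have hT' : ρ ((MulAut.conjNormal g)⁻¹ n) = T⁻¹ * ρ n * T := by
      simpa [mul_assoc] using congrArg (T⁻¹ * · * T) (hT ((MulAut.conjNormal g)⁻¹ n)).symm
    rw [zpow_sub_one, map_mul, map_inv, MulAut.mul_apply, ih, hT', zpow_sub_one]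
    group

theorem commute_inv_mul_zpow_of_map_conjNormal
    (hT : ∀ n : N, ρ (MulAut.conjNormal g n) = T * ρ n * T⁻¹) {k : ℤ} {c : N}
    (hc : (c : G) = g ^ k) (n : N) : Commute ((ρ c)⁻¹ * T ^ k) (ρ n) := by
  have hconj : MulAut.conjNormal (g ^ k) n = c * n * c⁻¹ := by
    ext; rw [MulAut.conjNormal_apply]; simp [hc]
  have h := map_conjNormal_zpow hT k n
  rw [hconj, map_mul, map_mul, map_inv] at h
  rw [Commute, SemiconjBy, mul_assoc, inv_mul_eq_iff_eq_mul, ← mul_assoc, ← mul_assoc, h]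
  group

theorem zpow_eq_of_pow_orderOf_eq {c : N} (hc : (c : G) = g ^ orderOf (g : G ⧸ N))
    (hTc : T ^ orderOf (g : G ⧸ N) = ρ c) (k : ℤ) (n : N) (hn : (n : G) = g ^ k) :
    T ^ k = ρ n := by
  have hdvd : (orderOf (g : G ⧸ N) : ℤ) ∣ k := by
    rw [orderOf_dvd_iff_zpow_eq_one, ← QuotientGroup.mk_zpow, QuotientGroup.eq_one_iff, ← hn]
    exact n.2
  obtain ⟨j, rfl⟩ := hdvd
  have : n = c ^ j := Subtype.ext (by simp [hn, hc, zpow_mul])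
  rw [this, zpow_mul, zpow_natCast, hTc, map_zpow]

/-- `ρ` and `k ↦ T ^ k` define a homomorphism on `N ⋊ ℤ` (with `ℤ` acting by conjugation by `g`),
which descends along the surjection `(n, k) ↦ n * g ^ k` onto `G`. -/
theorem exists_extension_of_map_conjNormal (hg : ∀ x : G ⧸ N, x ∈ Subgroup.zpowers (g : G ⧸ N))
    (hT : ∀ n : N, ρ (MulAut.conjNormal g n) = T * ρ n * T⁻¹)
    (hTpow : ∀ (k : ℤ) (n : N), (n : G) = g ^ k → T ^ k = ρ n) :
    ∃ ρ' : G →* M, ∀ n : N, ρ' n = ρ n := by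
  let φ : Multiplicative ℤ →* MulAut N := MulAut.conjNormal.comp (zpowersHom G g)
  let π : N ⋊[φ] Multiplicative ℤ →* G :=
    SemidirectProduct.lift N.subtype (zpowersHom G g) fun k ↦ by
      ext n
      simp only [MonoidHom.comp_apply, MulEquiv.coe_toMonoidHom, zpowersHom_apply,
        MulAut.conj_apply, φ]
      exact MulAut.conjNormal_apply _ n
  let ψ : N ⋊[φ] Multiplicative ℤ →* M :=
    SemidirectProduct.lift ρ (zpowersHom M T) fun k ↦ by
      ext n
      simp only [MonoidHom.comp_apply, MulEquiv.coe_toMonoidHom, zpowersHom_apply,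
        MulAut.conj_apply, φ]
      exact map_conjNormal_zpow hT _ n
  have hπ : Function.Surjective π := by
    intro x
    obtain ⟨k, hk⟩ := hg x
    have hmem : x * g ^ (-k) ∈ N := by
      rw [← QuotientGroup.eq_one_iff, QuotientGroup.mk_mul, QuotientGroup.mk_zpow, ← hk]
      simp
    exact ⟨⟨⟨_, hmem⟩, .ofAdd k⟩, by simp [π]⟩
  have hker : π.ker ≤ ψ.ker := by
    rintro ⟨n, k⟩ hnk
    have hn : ((n⁻¹ : N) : G) = g ^ k.toAdd := by
      simpa [π, eq_comm, inv_eq_iff_mul_eq_one] using hnk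
    simp [ψ, hTpow _ _ hn]
  exact ⟨π.liftOfSurjective hπ ⟨ψ, hker⟩, fun n ↦ by
    simpa [π, ψ] using π.liftOfRightInverse_comp_apply _ _ ⟨ψ, hker⟩ (SemidirectProduct.inl n)⟩

end Extension

theorem Units.exists_mem_center_pow_eq_of_algebraMap_eq {k A : Type*} [Field k] [IsAlgClosed k]
    [Ring A] [Nontrivial A] [Algebra k A] {m : ℕ} (hm : 0 < m) {S : Aˣ} {μ : k}
    (hS : algebraMap k A μ = S) : ∃ z ∈ Subgroup.center Aˣ, z ^ m = S := by
  have hμ : μ ≠ 0 := by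
    rintro rfl
    exact S.ne_zero (by rw [← hS, map_zero])
  obtain ⟨ζ, hζ⟩ := IsAlgClosed.exists_pow_nat_eq μ hm
  have hζ0 : ζ ≠ 0 := by
    rintro rfl
    exact hμ (by rw [← hζ, zero_pow hm.ne'])
  refine ⟨Units.map (algebraMap k A : k →* A) (Units.mk0 ζ hζ0), ?_, ?_⟩
  · exact Subgroup.mem_center_iff.mpr fun y ↦ Units.ext (Algebra.commutes ζ (y : A)).symm
  · ext
    simp [← hS, ← hζ]

namespace Representation

variable {k G V : Type*} [Field k] [AddCommGroup V] [Module k V]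

theorem isIrreducible_of_forall_invariant [Monoid G] [Nontrivial V] (ρ : Representation k G V)
    (h : ∀ W : Submodule k V, (∀ (g : G) (v : V), v ∈ W → ρ g v ∈ W) → W = ⊥ ∨ W = ⊤) :
    ρ.IsIrreducible where
  exists_pair_ne := ⟨⊥, ⊤, fun h ↦ bot_ne_top (congrArg Subrepresentation.toSubmodule h)⟩
  eq_bot_or_eq_top W := by
    rcases h W.toSubmodule fun g v hv ↦ W.apply_mem_toSubmodule g hv with hW | hW
    · exact .inl (Subrepresentation.ext hW)
    · exact .inr (Subrepresentation.ext hW)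

theorem IsIrreducible.exists_algebraMap_eq_of_commute [Monoid G] [IsAlgClosed k]
    [FiniteDimensional k V] {ρ : Representation k G V} [ρ.IsIrreducible] {f : Module.End k V}
    (hf : ∀ g, Commute f (ρ g)) : ∃ μ : k, algebraMap k (Module.End k V) μ = f := by
  let F : IntertwiningMap ρ ρ := f.intertwiningMap_of_isIntertwiningMap ρ ρ fun g v ↦
    LinearMap.congr_fun (hf g) v
  obtain ⟨μ, hμ⟩ := algebraMap_intertwiningMap_bijective_of_isAlgClosed.2 F
  refine ⟨μ, LinearMap.ext fun v ↦ ?_⟩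
  simpa [F] using DFunLike.congr_fun hμ v

theorem exists_map_conjNormal_and_pow_eq [IsAlgClosed k] [FiniteDimensional k V] [Nontrivial V]
    [Group G] {N : Subgroup G} [N.Normal] {σ : Representation k N V} [σ.IsIrreducible] {g : G}
    {T : (V →ₗ[k] V)ˣ}
    (hT : ∀ n : N, σ.asGroupHom (MulAut.conjNormal g n) = T * σ.asGroupHom n * T⁻¹)
    {m : ℕ} {c : N} (hc : (c : G) = g ^ m) :
    ∃ T' : (V →ₗ[k] V)ˣ,
      (∀ n : N, σ.asGroupHom (MulAut.conjNormal g n) = T' * σ.asGroupHom n * T'⁻¹) ∧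
        T' ^ m = σ.asGroupHom c := by
  rcases m.eq_zero_or_pos with rfl | hm
  · have : c = 1 := Subtype.ext (by simpa using hc)
    exact ⟨T, hT, by simp [this]⟩
  have hcomm (n : N) : Commute ((σ.asGroupHom c)⁻¹ * T ^ m) (σ.asGroupHom n) := by
    simpa using commute_inv_mul_zpow_of_map_conjNormal hT (k := m) (by simpa using hc) n
  obtain ⟨μ, hμ⟩ := IsIrreducible.exists_algebraMap_eq_of_commute (ρ := σ) fun n ↦ by
    simpa only [asGroupHom_apply] using (hcomm n).units_val
  obtain ⟨z, hz, hzm⟩ := Units.exists_mem_center_pow_eq_of_algebraMap_eq hm hμ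
  have hz' (y : (V →ₗ[k] V)ˣ) : y * z⁻¹ = z⁻¹ * y := Subgroup.mem_center_iff.mp (inv_mem hz) y
  refine ⟨T * z⁻¹, fun n ↦ ?_, ?_⟩
  · calc σ.asGroupHom (MulAut.conjNormal g n) = T * σ.asGroupHom n * T⁻¹ := hT n
      _ = T * (z⁻¹ * σ.asGroupHom n * z) * T⁻¹ := by rw [← hz', inv_mul_cancel_right]
      _ = T * z⁻¹ * σ.asGroupHom n * (T * z⁻¹)⁻¹ := by group
  · rw [Commute.mul_pow (hz' T), inv_pow, hzm]
    group

end Representation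

theorem stmt_13 (G : Type*) [Group G] (N : Subgroup G) (hN : N.Normal)
    [IsCyclic (G ⧸ N)]
    (V : Type*) [AddCommGroup V] [Module ℂ V] [FiniteDimensional ℂ V]
    (σ : Representation ℂ N V)
    -- σ is irreducible
    (hirr : Nontrivial V ∧ ∀ W : Submodule ℂ V, (∀ (n : N) (v : V), v ∈ W → σ n v ∈ W) →
      W = ⊥ ∨ W = ⊤)
    -- the stabilizer of σ under G-conjugation is all of G: σ^g ≅ σ for all g ∈ G
    (hstab : ∀ g : G, ∃ e : V ≃ₗ[ℂ] V, ∀ (n : N) (v : V),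
      e (σ (⟨g⁻¹ * (n : G) * g, by simpa using hN.conj_mem _ n.2 g⁻¹⟩ : N) v) = σ n (e v)) :
    ∃ σt : Representation ℂ G V, ∀ n : N, σt (n : G) = σ n := by
  have := hirr.1
  have := σ.isIrreducible_of_forall_invariant hirr.2
  obtain ⟨x, hx⟩ := IsCyclic.exists_generator (α := G ⧸ N)
  obtain ⟨g, rfl⟩ := QuotientGroup.mk_surjective x
  obtain ⟨e, he⟩ := hstab g
  let T₀ := LinearMap.GeneralLinearGroup.ofLinearEquiv e
  have hT₀ (n : N) : σ.asGroupHom (MulAut.conjNormal g n) = T₀ * σ.asGroupHom n * T₀⁻¹ := by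
    ext v
    change σ (MulAut.conjNormal g n) v = e (σ n (e.symm v))
    simpa [MulAut.conjNormal_apply, mul_assoc] using
      (he (MulAut.conjNormal g n) (e.symm v)).symm
  obtain ⟨T, hT, hTc⟩ := σ.exists_map_conjNormal_and_pow_eq hT₀ (c := ⟨g ^ orderOf (g : G ⧸ N), by
    rw [← QuotientGroup.eq_one_iff, QuotientGroup.mk_pow, pow_orderOf_eq_one]⟩) rfl
  obtain ⟨ρ, hρ⟩ := exists_extension_of_map_conjNormal hx hT (zpow_eq_of_pow_orderOf_eq rfl hTc)
  exact ⟨(Units.coeHom _).comp ρ, fun n ↦ by simp [hρ, Representation.asGroupHom_apply]⟩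
end

section
/- Let G be a finite group, N ⊴ G with G/N cyclic, and let τ be an irreducible complex representation of G such that τ|_N is isotypic with irreducible constituent σ and the stabilizer of σ in G is all of G. Then τ ≅ σ̃ ⊗ χ for some extension σ̃ of σ to G and some character χ of G/N; in particular, τ|_N is irreducible. -/
/-!
Every nonzero `N`-intertwiner `S : τ|_N → σ` is surjective by Schur's lemma. Choose `g` with
`gN` generating `G/N` and an isomorphism `A : σ^g ≅ σ`, which exists because `σ` is `G`-stable.
Then `S ↦ A ∘ S ∘ τ(g)⁻¹` is an invertible operator on `Hom_N(τ|_N, σ)`, a space which is nonzero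
since `τ|_N` is `σ`-isotypic. The kernel of an eigenvector `S` of this operator is stable under `N`
and `g`, hence under `G`, so `S` is injective because `τ` is irreducible. Thus `τ|_N ≅ σ`, and
transporting `τ` along this isomorphism gives an extension `σ̃` of `σ` with `τ ≅ σ̃`, so `χ`
can be taken trivial.
-/

open Function

theorem Subgroup.eq_top_of_le_of_zpowers_mk_eq_top {G : Type*} [Group G] {N H : Subgroup G}
    [N.Normal] {g : G} (hg : Subgroup.zpowers (g : G ⧸ N) = ⊤) (hNH : N ≤ H) (hgH : g ∈ H) :
    H = ⊤ := by
  refine eq_top_iff.mpr fun x _ => ?_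
  obtain ⟨n, hn⟩ := Subgroup.mem_zpowers_iff.mp (hg ▸ Subgroup.mem_top (x : G ⧸ N))
  have hx : (g ^ n)⁻¹ * x ∈ N := by rw [← QuotientGroup.eq, QuotientGroup.mk_zpow, hn]
  simpa using H.mul_mem (H.zpow_mem hgH n) (hNH hx)

namespace Representation

section Irreducible

variable {k G V W : Type*} [Field k] [Monoid G] [AddCommGroup V] [Module k V]
  [AddCommGroup W] [Module k W]

theorem isIrreducible_iff (ρ : Representation k G V) :
    ρ.IsIrreducible ↔ Nontrivial V ∧
      ∀ U : Submodule k V, (∀ (g : G) (v : V), v ∈ U → ρ g v ∈ U) → U = ⊥ ∨ U = ⊤ := by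
  have eq_bot_iff (U : Subrepresentation ρ) : U = ⊥ ↔ U.toSubmodule = ⊥ :=
    ⟨fun h => h ▸ rfl, fun h => Subrepresentation.ext h⟩
  have eq_top_iff (U : Subrepresentation ρ) : U = ⊤ ↔ U.toSubmodule = ⊤ :=
    ⟨fun h => h ▸ rfl, fun h => Subrepresentation.ext h⟩
  constructor
  · intro hρ
    refine ⟨(Submodule.nontrivial_iff k).mp (nontrivial_of_ne ⊤ ⊥ ((eq_bot_iff ⊤).not.mp top_ne_bot)),
      fun U hU => ?_⟩
    simpa [eq_bot_iff, eq_top_iff] using hρ.eq_bot_or_eq_top ⟨U, fun g _ hv => hU g _ hv⟩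
  · rintro ⟨hV, hρ⟩
    have : Nontrivial (Subrepresentation ρ) := ⟨⊤, ⊥, (eq_bot_iff ⊤).not.mpr top_ne_bot⟩
    exact ⟨fun U => by
      simpa [eq_bot_iff, eq_top_iff] using hρ U.toSubmodule fun g _ hv => U.apply_mem_toSubmodule g hv⟩

theorem Equiv.isIrreducible {ρ : Representation k G V} {σ : Representation k G W}
    (φ : ρ.Equiv σ) [ρ.IsIrreducible] : σ.IsIrreducible := by
  obtain ⟨hV, hρ⟩ := (isIrreducible_iff ρ).mp ‹_›
  refine (isIrreducible_iff σ).mpr ⟨(EquivLike.injective φ).nontrivial, fun U hU => ?_⟩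
  have hcomap := hρ (U.comap (φ.toLinearEquiv : V →ₗ[k] W)) fun g v hv => by
    simpa [φ.isIntertwining] using hU g _ hv
  rwa [Submodule.comap_equiv_eq_map_symm, Submodule.map_eq_bot_iff, Submodule.map_eq_top_iff]
    at hcomap

end Irreducible

section Stabilizer

variable {k G V W : Type*} [CommSemiring k] [Group G] [AddCommMonoid V] [Module k V]
  [AddCommMonoid W] [Module k W]

def stabilizer (ρ : Representation k G V) (U : Submodule k V) : Subgroup G where
  carrier := {g | U.comap (ρ g) = U}
  one_mem' := by
    change U.comap (ρ 1) = U
    rw [map_one, Module.End.one_eq_id, Submodule.comap_id]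
  mul_mem' {a b} (ha : U.comap (ρ a) = U) (hb : U.comap (ρ b) = U) := by
    change U.comap (ρ (a * b)) = U
    rw [map_mul, Module.End.mul_eq_comp, Submodule.comap_comp, ha, hb]
  inv_mem' {a} (ha : U.comap (ρ a) = U) := by
    change U.comap (ρ a⁻¹) = U
    conv_lhs => rw [← ha]
    rw [← Submodule.comap_comp, ← Module.End.mul_eq_comp, ← map_mul, mul_inv_cancel, map_one,
      Module.End.one_eq_id, Submodule.comap_id]

theorem apply_mem_of_stabilizer_eq_top {ρ : Representation k G V} {U : Submodule k V}
    (hU : ρ.stabilizer U = ⊤) (g : G) {v : V} (hv : v ∈ U) : ρ g v ∈ U := by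
  have hg : U.comap (ρ g) = U := (hU ▸ Subgroup.mem_top g : g ∈ ρ.stabilizer U)
  rw [← Submodule.mem_comap, hg]
  exact hv

theorem IntertwiningMap.comap_ker_eq {ρ : Representation k G V} {σ : Representation k G W}
    (S : IntertwiningMap ρ σ) (g : G) :
    (LinearMap.ker S.toLinearMap).comap (ρ g) = LinearMap.ker S.toLinearMap := by
  ext v
  simp [S.isIntertwining, map_eq_zero_iff _ (σ.apply_bijective g).injective]

end Stabilizer

theorem exists_intertwiningMap_ne_zero {k H V W ι : Type*} [Field k] [Monoid H] [AddCommGroup V]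
    [Module k V] [AddCommGroup W] [Module k W] [Nontrivial W] {ρ : Representation k H W}
    {σ : Representation k H V} (e : W ≃ₗ[k] (ι → V))
    (he : ∀ (h : H) (w : W), e (ρ h w) = fun i => σ h (e w i)) :
    ∃ S : IntertwiningMap ρ σ, S ≠ 0 := by
  obtain ⟨w, hw⟩ := exists_ne (0 : W)
  obtain ⟨i, hi⟩ := Function.ne_iff.mp (e.map_ne_zero_iff.mpr hw)
  refine ⟨⟨LinearMap.proj i ∘ₗ e.toLinearMap, fun h => LinearMap.ext fun w => by simp [he]⟩,
    fun hS => hi ?_⟩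
  simpa using congr($hS w)

theorem Equiv.exists_extension {k G V W : Type*} [CommSemiring k] [Group G] [AddCommMonoid V]
    [Module k V] [AddCommMonoid W] [Module k W] {N : Subgroup G} {τ : Representation k G W}
    {σ : Representation k N V} (φ : Representation.Equiv (τ.comp N.subtype) σ) :
    ∃ σt : Representation k G V, (∀ n : N, σt n = σ n) ∧ ∀ (g : G) (w : W), φ (τ g w) = σt g (φ w) :=
  ⟨φ.toLinearEquiv.conjRingEquiv.toMonoidHom.comp τ, fun n => φ.conj_apply_self n,
    fun g w => congrArg (fun v => φ (τ g v)) (φ.symm_apply_apply w).symm⟩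

section Twist

variable {k G V W : Type*} [Field k] [Group G] [AddCommGroup V] [Module k V] [AddCommGroup W]
  [Module k W] {N : Subgroup G} [hN : N.Normal] (τ : Representation k G W)
  (σ : Representation k N V) (g : G) (A : V ≃ₗ[k] V)
  (hA : ∀ (n : N) (v : V), A (σ ⟨g⁻¹ * n * g, by simpa using hN.conj_mem _ n.2 g⁻¹⟩ v) = σ n (A v))

def twist : IntertwiningMap (τ.comp N.subtype) σ →ₗ[k] IntertwiningMap (τ.comp N.subtype) σ where
  toFun S := ⟨A.toLinearMap ∘ₗ S.toLinearMap ∘ₗ τ g⁻¹, fun n => LinearMap.ext fun w => by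
    have hconj : τ g⁻¹ (τ n w) = τ (g⁻¹ * n * g) (τ g⁻¹ w) := by
      simp [← Module.End.mul_apply, ← map_mul]
    calc A (S (τ g⁻¹ (τ n w)))
        = A (S ((τ.comp N.subtype) ⟨g⁻¹ * n * g, _⟩ (τ g⁻¹ w))) := by rw [hconj]; rfl
      _ = σ n (A (S (τ g⁻¹ w))) := by rw [S.isIntertwining, hA]⟩
  map_add' S S' := by ext; simp
  map_smul' c S := by ext; simp

@[simp]
theorem twist_apply (S : IntertwiningMap (τ.comp N.subtype) σ) (w : W) :
    twist τ σ g A hA S w = A (S (τ g⁻¹ w)) :=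
  rfl

theorem ker_twist (S : IntertwiningMap (τ.comp N.subtype) σ) :
    LinearMap.ker (twist τ σ g A hA S).toLinearMap =
      (LinearMap.ker S.toLinearMap).comap (τ g⁻¹) := by
  ext w
  simp

variable {τ σ g A hA}

theorem exists_twist_eq_smul [IsAlgClosed k] [FiniteDimensional k V] [FiniteDimensional k W]
    {S₀ : IntertwiningMap (τ.comp N.subtype) σ} (hS₀ : S₀ ≠ 0) :
    ∃ S ≠ 0, ∃ μ : k, twist τ σ g A hA S = μ • S := by
  have := nontrivial_of_ne S₀ 0 hS₀
  obtain ⟨μ, hμ⟩ := Module.End.exists_eigenvalue (twist τ σ g A hA)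
  obtain ⟨S, hS⟩ := hμ.exists_hasEigenvector
  exact ⟨S, hS.2, μ, hS.apply_eq_smul⟩

theorem bijective_of_twist_eq_smul [σ.IsIrreducible] [τ.IsIrreducible]
    (hg : Subgroup.zpowers (g : G ⧸ N) = ⊤) {S : IntertwiningMap (τ.comp N.subtype) σ}
    (hS : S ≠ 0) {μ : k} (hSμ : twist τ σ g A hA S = μ • S) : Bijective S := by
  have hμ : μ ≠ 0 := by
    rintro rfl
    apply hS
    ext w
    simpa using congr($hSμ (τ g w))
  set K := LinearMap.ker S.toLinearMap
  have hstab : τ.stabilizer K = ⊤ := by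
    refine Subgroup.eq_top_of_le_of_zpowers_mk_eq_top hg (fun n hn => S.comap_ker_eq ⟨n, hn⟩) ?_
    have hKg : K.comap (τ g⁻¹) = K := by
      rw [← ker_twist τ σ g A hA, hSμ, IntertwiningMap.toLinearMap_smul, LinearMap.ker_smul _ _ hμ]
    exact inv_mem_iff.mp hKg
  have hK : K = ⊥ := by
    refine (((isIrreducible_iff τ).mp ‹_›).2 K fun g' _ => apply_mem_of_stabilizer_eq_top hstab g')
      |>.resolve_right fun hKtop => hS ?_
    ext w
    exact LinearMap.ker_eq_top.mp hKtop ▸ rfl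
  exact ⟨LinearMap.ker_eq_bot.mp hK, (IsIrreducible.surjective_or_eq_zero S).resolve_right hS⟩

end Twist

end Representation

theorem stmt_14 (G : Type*) [Group G] (N : Subgroup G) (hN : N.Normal)
    [IsCyclic (G ⧸ N)]
    (V W : Type*) [AddCommGroup V] [Module ℂ V] [FiniteDimensional ℂ V]
    [AddCommGroup W] [Module ℂ W] [FiniteDimensional ℂ W]
    (σ : Representation ℂ N V) (τ : Representation ℂ G W)
    -- σ is irreducible
    (hσirr : Nontrivial V ∧ ∀ U : Submodule ℂ V, (∀ (n : N) (v : V), v ∈ U → σ n v ∈ U) →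
      U = ⊥ ∨ U = ⊤)
    -- τ is irreducible
    (hτirr : Nontrivial W ∧ ∀ U : Submodule ℂ W, (∀ (g : G) (w : W), w ∈ U → τ g w ∈ U) →
      U = ⊥ ∨ U = ⊤)
    -- the stabilizer of σ under G-conjugation is all of G
    (hstab : ∀ g : G, ∃ e : V ≃ₗ[ℂ] V, ∀ (n : N) (v : V),
      e (σ (⟨g⁻¹ * (n : G) * g, by simpa using hN.conj_mem _ n.2 g⁻¹⟩ : N) v) = σ n (e v))
    -- τ|_N is σ-isotypic: it is equivalent to a direct sum of m copies of σ
    (hisotypic : ∃ (m : ℕ) (e : W ≃ₗ[ℂ] (Fin m → V)), ∀ (n : N) (w : W),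
      e (τ (n : G) w) = fun i => σ n (e w i)) :
    (∃ (σt : Representation ℂ G V) (χ : G →* ℂˣ),
      (∀ n : N, σt (n : G) = σ n) ∧ (∀ n : N, χ (n : G) = 1) ∧
      ∃ e : W ≃ₗ[ℂ] V, ∀ (g : G) (w : W), e (τ g w) = (χ g : ℂ) • σt g (e w)) ∧
    -- in particular τ|_N is irreducible
    (∀ U : Submodule ℂ W, (∀ (n : N) (w : W), w ∈ U → τ (n : G) w ∈ U) → U = ⊥ ∨ U = ⊤) := by
  have := hτirr.1
  have := (Representation.isIrreducible_iff σ).mpr hσirr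
  have := (Representation.isIrreducible_iff τ).mpr hτirr
  obtain ⟨g, hg⟩ : ∃ g : G, Subgroup.zpowers (g : G ⧸ N) = ⊤ := by
    obtain ⟨x, hx⟩ := IsCyclic.exists_generator (α := G ⧸ N)
    obtain ⟨g, rfl⟩ := QuotientGroup.mk_surjective x
    exact ⟨g, (Subgroup.eq_top_iff' _).mpr hx⟩
  obtain ⟨A, hA⟩ := hstab g
  obtain ⟨m, e, he⟩ := hisotypic
  obtain ⟨S₀, hS₀⟩ := Representation.exists_intertwiningMap_ne_zero (ρ := τ.comp N.subtype) e he
  obtain ⟨S, hS, μ, hSμ⟩ := Representation.exists_twist_eq_smul (A := A) (hA := hA) hS₀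
  let φ := S.ofBijective (Representation.bijective_of_twist_eq_smul hg hS hSμ)
  obtain ⟨σt, hσt, hφ⟩ := φ.exists_extension
  refine ⟨⟨σt, 1, hσt, fun _ => rfl, φ.toLinearEquiv, fun g w => by simpa using hφ g w⟩, ?_⟩
  exact ((Representation.isIrreducible_iff _).mp φ.symm.isIrreducible).2
end
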